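/- Let i < j, let (Λ, k) ∈ N_i and (Θ, u) ∈ N_j with u < k and λ_u ≥ 1, and set Γ = Λ − e_u + Θ (the exponent partition of the nonzero Lie bracket [x^Λ∂_k, x^Θ∂_u]). Then (Γ, k) ∈ N_{j−1}. -/

import Mathlib

/-- Weight of a partition (finitely supported sequence of multiplicities). -/
def wt (Λ : ℕ →₀ ℕ) : ℕ := Λ.sum fun m c => m * c

/-- Degree (number of parts, with multiplicity) of a partition. -/
def deg (Λ : ℕ →₀ ℕ) : ℕ := Λ.sum fun _ c => c

/-- Basis element of the integral Lie ring of partitions: a pair (Λ, k) with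
1 ≤ k ≤ n and all parts of Λ in {1,…,k-1}. -/
def IsBasisElt (n : ℕ) (Λ : ℕ →₀ ℕ) (k : ℕ) : Prop :=
  1 ≤ k ∧ k ≤ n ∧ Λ 0 = 0 ∧ ∀ m, k ≤ m → Λ m = 0

/-- The weight-degree function. -/
def WD (n : ℕ) (Λ : ℕ →₀ ℕ) (k : ℕ) : ℤ :=
  (wt Λ : ℤ) - (deg Λ : ℤ) + (n : ℤ) - (k : ℤ)

/-- h_i = ⌊(i-1)/(n-1)⌋ + 1. -/
def hh (n : ℕ) (i : ℤ) : ℤ := (i - 1).fdiv ((n : ℤ) - 1) + 1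

/-- r_i = i - (h_i - 1)(n-1). -/
def rr (n : ℕ) (i : ℤ) : ℤ := i - (hh n i - 1) * ((n : ℤ) - 1)

/-- The i-th level function lev_i(Λ,k) = h_i·WD(Λ,k) + deg(Λ) - 1. -/
def lev (n : ℕ) (i : ℤ) (Λ : ℕ →₀ ℕ) (k : ℕ) : ℤ :=
  hh n i * WD n Λ k + (deg Λ : ℤ) - 1

/-- N_i = set of basis elements with lev_j ≤ j for some -1 ≤ j ≤ i. -/
def Nset (n : ℕ) (i : ℤ) : Set ((ℕ →₀ ℕ) × ℕ) :=
  {p | IsBasisElt n p.1 p.2 ∧ ∃ j : ℤ, -1 ≤ j ∧ j ≤ i ∧ lev n j p.1 p.2 ≤ j}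

/-- L_i = set of basis elements for which i is the least index j ≥ -1 with lev_j = j. -/
def Lset (n : ℕ) (i : ℤ) : Set ((ℕ →₀ ℕ) × ℕ) :=
  {p | IsBasisElt n p.1 p.2 ∧ lev n i p.1 p.2 = i ∧
    ∀ j : ℤ, -1 ≤ j → lev n j p.1 p.2 = j → i ≤ j}

/-- The partition function p(s). -/
def pfun (s : ℕ) : ℕ := Fintype.card (Nat.Partition s)

/-- b_m = Σ_{s=0}^m p(s). -/
def bnat (m : ℕ) : ℕ := ∑ s ∈ Finset.range (m + 1), pfun s

/-- c_m = Σ_{s=0}^m b_s. -/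
def cnat (m : ℕ) : ℕ := ∑ s ∈ Finset.range (m + 1), bnat s

/-- b extended to ℤ, with b_m = 0 for m < 0. -/
def bint (m : ℤ) : ℕ := if m < 0 then 0 else bnat m.toNat

/-- The period map per(Λ,k) = (Λ + (n-1-WD(Λ,k))·e₁, k). -/
noncomputable def per (n : ℕ) (p : (ℕ →₀ ℕ) × ℕ) : (ℕ →₀ ℕ) × ℕ :=
  (p.1 + Finsupp.single 1 (((n : ℤ) - 1 - WD n p.1 p.2).toNat), p.2)

/-!
Write `N = n - 1`, and let `lev_s(Λ,k) ≤ s` and `lev_t(Θ,u) ≤ t` witness the two memberships.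
Since `lev_w(Γ,k) = lev_w(Λ,k) + lev_w(Θ,u) - h_w N` and `w ≤ h_w N`, the index `s` works for
`Γ` as soon as `lev_s(Θ,u) ≤ h_s N`. Otherwise `deg Θ ≥ 2`, which forces `WD(Θ,u) < N` and then
`h_s < h_t`. In that case the index `t - 1` works: going from `t` to `t - 1` lowers `lev(Θ,u)` by
at least `h_t - h_{t-1}` because `WD(Θ,u) ≥ 1`, and going from `s` to `t - 1` lowers
`lev(Λ,k) - h N` by at least `h_{t-1} - h_s` because `WD(Λ,k) < N`; in total the level drops by
`h_t - h_s ≥ 1`.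
-/

lemma wt_eq_weight (Λ : ℕ →₀ ℕ) : wt Λ = Finsupp.weight id Λ :=
  Finsupp.sum_congr fun m _ => mul_comm m (Λ m)

lemma deg_eq_degree (Λ : ℕ →₀ ℕ) : deg Λ = Λ.degree := rfl

lemma wt_add (Λ Θ : ℕ →₀ ℕ) : wt (Λ + Θ) = wt Λ + wt Θ := by
  simp only [wt_eq_weight, map_add]

lemma deg_add (Λ Θ : ℕ →₀ ℕ) : deg (Λ + Θ) = deg Λ + deg Θ := map_add Finsupp.degree Λ Θ

lemma wt_sub_single_add {Λ : ℕ →₀ ℕ} {u : ℕ} (hu : Λ u ≠ 0) :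
    wt (Λ - Finsupp.single u 1) + u = wt Λ := by
  simpa only [wt_eq_weight, id] using Finsupp.weight_sub_single_add (w := id) hu

lemma deg_sub_single_add {Λ : ℕ →₀ ℕ} {u : ℕ} (hu : Λ u ≠ 0) :
    deg (Λ - Finsupp.single u 1) + 1 = deg Λ := by
  simpa only [deg_eq_degree, Finsupp.degree_eq_weight_one]
    using Finsupp.weight_sub_single_add (w := fun _ => 1) hu

lemma deg_le_wt {Λ : ℕ →₀ ℕ} (h0 : Λ 0 = 0) : deg Λ ≤ wt Λ := by
  refine Finset.sum_le_sum fun m hm => Nat.le_mul_of_pos_left _ (Nat.pos_of_ne_zero ?_)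
  rintro rfl
  exact Finsupp.mem_support_iff.mp hm h0

lemma wt_le_mul_deg {Λ : ℕ →₀ ℕ} {k : ℕ} (h : ∀ m, k ≤ m → Λ m = 0) :
    wt Λ ≤ (k - 1) * deg Λ := by
  rw [wt, deg, Finsupp.sum, Finsupp.sum, Finset.mul_sum]
  refine Finset.sum_le_sum fun m hm => Nat.mul_le_mul_right _ ?_
  have : m < k := lt_of_not_ge fun hkm => Finsupp.mem_support_iff.mp hm (h m hkm)
  omega

section LevelIndex

variable {n : ℕ}

lemma hh_eq_ediv (hn : 1 ≤ n) (w : ℤ) : hh n w = (w - 1) / ((n : ℤ) - 1) + 1 := by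
  rw [hh, Int.fdiv_eq_ediv_of_nonneg _ (by omega)]

lemma le_hh_mul (hn : 2 ≤ n) (w : ℤ) : w ≤ hh n w * ((n : ℤ) - 1) := by
  have := Int.lt_ediv_add_one_mul_self (w - 1) (b := (n : ℤ) - 1) (by omega)
  rw [hh_eq_ediv (by omega)]
  linarith

lemma hh_sub_one_mul_le (hn : 2 ≤ n) (w : ℤ) : (hh n w - 1) * ((n : ℤ) - 1) ≤ w - 1 := by
  have := Int.ediv_mul_le (w - 1) (b := (n : ℤ) - 1) (by omega)
  rw [hh_eq_ediv (by omega)]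
  linarith

lemma hh_mono (hn : 2 ≤ n) {a b : ℤ} (h : a ≤ b) : hh n a ≤ hh n b := by
  rw [hh_eq_ediv (by omega), hh_eq_ediv (by omega)]
  have := Int.ediv_le_ediv (c := (n : ℤ) - 1) (by omega) (by omega : a - 1 ≤ b - 1)
  omega

lemma hh_le_hh_sub_one_add_one (hn : 2 ≤ n) (w : ℤ) : hh n w ≤ hh n (w - 1) + 1 := by
  have hN : (n : ℤ) - 1 ≠ 0 := by omega
  have := Int.ediv_le_ediv (c := (n : ℤ) - 1) (by omega)
    (by omega : w - 1 ≤ w - 1 - 1 + 1 * ((n : ℤ) - 1))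
  rw [Int.add_mul_ediv_right _ _ hN] at this
  rw [hh_eq_ediv (by omega), hh_eq_ediv (by omega)]
  omega

lemma hh_nonneg (hn : 3 ≤ n) {w : ℤ} (hw : -1 ≤ w) : 0 ≤ hh n w := by
  rw [hh_eq_ediv (by omega)]
  have := (Int.le_ediv_iff_mul_le (a := -1) (b := w - 1) (c := (n : ℤ) - 1) (by omega)).mpr
    (by omega)
  omega

lemma one_le_of_one_le_hh (hn : 2 ≤ n) {w : ℤ} (hw : 1 ≤ hh n w) : 1 ≤ w := by
  have := hh_sub_one_mul_le hn w
  nlinarith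

end LevelIndex

section Bracket

variable {n : ℕ} {Λ Θ : ℕ →₀ ℕ} {k u : ℕ}

lemma isBasisElt_bracket (hΛ : IsBasisElt n Λ k) (hΘ : IsBasisElt n Θ u) (huk : u < k) :
    IsBasisElt n (Λ + Θ - Finsupp.single u 1) k := by
  obtain ⟨hk1, hkn, hΛ0, hΛk⟩ := hΛ
  obtain ⟨-, -, hΘ0, hΘu⟩ := hΘ
  refine ⟨hk1, hkn, by simp [hΛ0, hΘ0], fun m hm => ?_⟩
  simp [hΛk m hm, hΘu m (by omega)]

lemma lev_bracket (hu : Λ u ≠ 0) (w : ℤ) :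
    lev n w (Λ + Θ - Finsupp.single u 1) k =
      lev n w Λ k + lev n w Θ u - hh n w * ((n : ℤ) - 1) := by
  have hΛΘ : (Λ + Θ) u ≠ 0 := by simp [hu]
  have hwt : (wt (Λ + Θ - Finsupp.single u 1) : ℤ) + u = wt Λ + wt Θ := by
    exact_mod_cast (wt_sub_single_add hΛΘ).trans (wt_add Λ Θ)
  have hdeg : (deg (Λ + Θ - Finsupp.single u 1) : ℤ) + 1 = deg Λ + deg Θ := by
    exact_mod_cast (deg_sub_single_add hΛΘ).trans (deg_add Λ Θ)
  simp only [lev, WD]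
  linear_combination hh n w * hwt + (1 - hh n w) * hdeg

end Bracket

section Level

variable {n : ℕ} {X : ℕ →₀ ℕ} {k : ℕ}

lemma sub_le_WD (h0 : X 0 = 0) : (n : ℤ) - k ≤ WD n X k := by
  have := deg_le_wt h0
  simp only [WD]
  omega

lemma WD_add_deg_le_of_deg_le_one (hX : IsBasisElt n X k) (hd : deg X ≤ 1) :
    WD n X k + deg X ≤ (n : ℤ) - 1 := by
  obtain ⟨hk1, -, -, hXk⟩ := hX
  have := (wt_le_mul_deg hXk).trans (Nat.mul_le_mul_left (k - 1) hd)
  simp only [WD]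
  omega

lemma lev_le_hh_mul_of_deg_le_one (hX : IsBasisElt n X k) {w : ℤ} (hw : 0 ≤ hh n w)
    (hd : deg X ≤ 1) : lev n w X k ≤ hh n w * ((n : ℤ) - 1) := by
  have hWD := WD_add_deg_le_of_deg_le_one hX hd
  have hd' : (deg X : ℤ) ≤ 1 := by exact_mod_cast hd
  simp only [lev]
  nlinarith [mul_nonneg hw (Int.natCast_nonneg (deg X))]

lemma WD_le_of_lev_le (hn : 3 ≤ n) (hX : IsBasisElt n X k) {s : ℤ} (hs : -1 ≤ s)
    (hlev : lev n s X k ≤ s) (hd : 1 ≤ deg X) : WD n X k ≤ (n : ℤ) - 2 := by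
  by_cases hd1 : deg X ≤ 1
  · have := WD_add_deg_le_of_deg_le_one hX hd1
    omega
  · by_contra! hW
    have := mul_le_mul_of_nonneg_left (by omega : (n : ℤ) - 1 ≤ WD n X k) (hh_nonneg hn hs)
    have := le_hh_mul (n := n) (by omega) s
    simp only [lev] at hlev
    omega

lemma lev_sub_lev (a b : ℤ) :
    lev n a X k - lev n b X k = (hh n a - hh n b) * WD n X k := by
  simp only [lev]
  ring

lemma lev_add_le_lev (hW : 1 ≤ WD n X k) {a b : ℤ} (hab : hh n a ≤ hh n b) :
    lev n a X k + (hh n b - hh n a) ≤ lev n b X k := by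
  nlinarith [lev_sub_lev (n := n) (X := X) (k := k) b a]

lemma lev_sub_hh_mul_le (hW : WD n X k ≤ (n : ℤ) - 2) {a b : ℤ} (hab : hh n a ≤ hh n b) :
    lev n b X k - hh n b * ((n : ℤ) - 1) + (hh n b - hh n a) ≤
      lev n a X k - hh n a * ((n : ℤ) - 1) := by
  nlinarith [lev_sub_lev (n := n) (X := X) (k := k) b a]

lemma hh_lt_of_hh_mul_lt_lev (hn : 3 ≤ n) (hX : IsBasisElt n X k) {s t : ℤ} (hs : -1 ≤ s)
    (ht : -1 ≤ t) (hlev : lev n t X k ≤ t) (hlt : hh n s * ((n : ℤ) - 1) < lev n s X k) :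
    hh n s < hh n t := by
  have hd : 2 ≤ deg X := by
    by_contra! hd
    exact hlt.not_ge (lev_le_hh_mul_of_deg_le_one hX (hh_nonneg hn hs) (by omega))
  by_contra! hts
  have := lev_sub_hh_mul_le (WD_le_of_lev_le hn hX ht hlev (by omega)) hts
  have := le_hh_mul (n := n) (by omega) t
  linarith

end Level

theorem stmt16 (n : ℕ) (hn : 3 ≤ n) (i j : ℤ) (hij : i < j)
    (Λ Θ : ℕ →₀ ℕ) (k u : ℕ) (hΛ : (Λ, k) ∈ Nset n i) (hΘ : (Θ, u) ∈ Nset n j)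
    (huk : u < k) (hu : 1 ≤ Λ u) :
    (Λ + Θ - Finsupp.single u 1, k) ∈ Nset n (j - 1) := by
  simp only [Nset, Set.mem_ofPred_eq] at hΛ hΘ ⊢
  obtain ⟨hΛb, s, hs1, hsi, hs⟩ := hΛ
  obtain ⟨hΘb, t, ht1, htj, ht⟩ := hΘ
  have hu0 : Λ u ≠ 0 := by omega
  refine ⟨isBasisElt_bracket hΛb hΘb huk, ?_⟩
  have hsN := le_hh_mul (n := n) (by omega) s
  rcases le_or_gt (lev n s Θ u) (hh n s * ((n : ℤ) - 1)) with hcase | hcase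
  · exact ⟨s, hs1, by omega, by rw [lev_bracket hu0]; linarith⟩
  have hst := hh_lt_of_hh_mul_lt_lev hn hΘb hs1 ht1 ht hcase
  have htpos := one_le_of_one_le_hh (by omega) (hh_nonneg hn hs1 |>.trans_lt hst)
  refine ⟨t - 1, by omega, by omega, ?_⟩
  have hΛlev := lev_sub_hh_mul_le (a := s) (b := t - 1)
    (WD_le_of_lev_le hn hΛb hs1 hs (hu.trans (Finsupp.le_degree u Λ)))
    (by linarith [hh_le_hh_sub_one_add_one (n := n) (by omega) t])
  have hWΘ : 1 ≤ WD n Θ u := by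
    have hkn : k ≤ n := hΛb.2.1
    linarith [sub_le_WD (n := n) (k := u) hΘb.2.2.1]
  have hΘlev := lev_add_le_lev (a := t - 1) (b := t) hWΘ (hh_mono (by omega) (by omega))
  rw [lev_bracket hu0]
  linarith
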